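/- For every n ≥ 1 and every finite nonempty set M ⊆ ℤⁿ with convex hull Δ, there exist coefficients c : M → ℝ and a line L ⊆ ℝⁿ such that every connected component of the complement of the associated tropical hypersurface T is unbounded, L ∩ T is finite, and L ∩ T consists of exactly #(M ∩ ∂Δ) − 1 points, where ∂Δ is the topological frontier of Δ in ℝⁿ. -/

import Mathlib

/-- The value of the tropical monomial with exponent `α` and coefficient `c α` at `x`. -/
noncomputable def tropVal (n : ℕ) (c : (Fin n → ℤ) → ℝ) (α : Fin n → ℤ) (x : Fin n → ℝ) : ℝ :=
  (∑ i, x i * (α i : ℝ)) + c α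

/-- The tropical hypersurface associated to the support `M` and coefficients `c`:
the set of points where the maximum of the tropical monomials is attained at least twice. -/
def tropHypersurface (n : ℕ) (M : Finset (Fin n → ℤ)) (c : (Fin n → ℤ) → ℝ) :
    Set (Fin n → ℝ) :=
  {x | ∃ α ∈ M, ∃ β ∈ M, α ≠ β ∧ tropVal n c α x = tropVal n c β x ∧
    ∀ γ ∈ M, tropVal n c γ x ≤ tropVal n c α x}

open Set

/-!
Pick `w` with `α ↦ ⟨w, α⟩` injective on `M`. Give each `α ∈ M ∩ ∂Δ` the coefficient
`-⟨w, α⟩²` and every other `α ∈ M` a coefficient below all of these. Since a nonzero linear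
form attains its maximum over `Δ` only on `∂Δ`, the other monomials never attain the maximum,
so `T` is the tropical hypersurface of `M ∩ ∂Δ` alone. On the line `ℝ w` these monomials read
`t ↦ t s - s²` with `s = ⟨w, α⟩`; the maximum is attained by the values `s` nearest to `t / 2`,
so it is attained twice exactly at the sums `sᵢ + sᵢ₊₁` of consecutive values: `#(M ∩ ∂Δ) - 1`
points. At a point `x ∉ T` a single `β ∈ M ∩ ∂Δ` wins; moving from `x` along an outer normal
of `Δ` at `β` only increases its lead, so the component of `x` contains a ray.
-/

theorem exists_ne_zero_injOn_dotProduct {K ι : Type*} [Field K] [Infinite K] [Fintype ι]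
    [Nonempty ι] {S : Set (ι → K)} (hS : S.Finite) :
    ∃ w : ι → K, w ≠ 0 ∧ S.InjOn (w ⬝ᵥ ·) := by
  classical
  have : Finite S.offDiag := hS.offDiag.to_subtype
  let p : Option S.offDiag → Subspace K (ι → K)
    | none => ⊥
    | some q => LinearMap.ker (dotProductEquiv K ι (q.1.1 - q.1.2))
  have hp : ∀ i, p i ≠ ⊤
    | none => bot_ne_top
    | some ⟨(a, b), _, _, hab⟩ => by
      rwa [Ne, LinearMap.ker_eq_top, LinearEquiv.map_eq_zero_iff, sub_eq_zero]
  obtain ⟨w, hw⟩ : ∃ w, w ∉ ⋃ i, (p i : Set (ι → K)) := by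
    by_contra! h
    obtain ⟨i, hi⟩ := Subspace.exists_eq_top_of_iUnion_eq_univ (eq_univ_of_forall h)
    exact hp i hi
  simp only [mem_iUnion, not_exists] at hw
  refine ⟨w, fun h => hw none (by simp [p, h]), fun a ha b hb hab => by_contra fun hne => ?_⟩
  exact hw (some ⟨(a, b), ha, hb, hne⟩) (by simp [p, dotProduct_comm _ w, hab])

section NormedSpace

variable {E : Type*} [NormedAddCommGroup E] [NormedSpace ℝ E]

theorem notMem_interior_of_isMaxOn {C : Set E} {z : E} {f : StrongDual ℝ E} (hf : f ≠ 0)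
    (hmax : IsMaxOn f C z) : z ∉ interior C := fun hz =>
  hf ((hmax.isLocalMax (mem_interior_iff_mem_nhds.mp hz)).hasFDerivAt_eq_zero f.hasFDerivAt)

theorem IsMaxOn.convexHull {S : Set E} {z : E} {f : StrongDual ℝ E} (hmax : IsMaxOn f S z) :
    IsMaxOn f (convexHull ℝ S) z := fun _ hy =>
  let ⟨_, hy', hle⟩ :=
    (f.toLinearMap.convexOn convex_univ).exists_ge_of_mem_convexHull (subset_univ _) hy
  hle.trans (hmax hy')

theorem mem_frontier_convexHull_of_isMaxOn {S : Set E} {z : E} {f : StrongDual ℝ E}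
    (hz : z ∈ S) (hf : f ≠ 0) (hmax : IsMaxOn f S z) : z ∈ frontier (convexHull ℝ S) :=
  ⟨subset_closure (subset_convexHull ℝ S hz), notMem_interior_of_isMaxOn hf hmax.convexHull⟩

theorem Convex.exists_isMaxOn_of_notMem_interior [FiniteDimensional ℝ E] {C : Set E}
    (hC : Convex ℝ C) {z : E} (hz : z ∈ C) (hzi : z ∉ interior C) :
    ∃ f : StrongDual ℝ E, f ≠ 0 ∧ IsMaxOn f C z := by
  rcases (interior C).eq_empty_or_nonempty with hint | ⟨y₀, hy₀⟩
  · -- `C` lies in a proper affine subspace; take a functional vanishing on its direction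
    have hdir : (affineSpan ℝ C).direction ≠ ⊤ := by
      rw [Ne, AffineSubspace.direction_eq_top_iff_of_nonempty ⟨z, subset_affineSpan ℝ C hz⟩,
        ← hC.interior_nonempty_iff_affineSpan_eq_top, hint]
      exact not_nonempty_empty
    obtain ⟨f, hf0, hf⟩ := Submodule.exists_dual_map_eq_bot_of_lt_top hdir.lt_top inferInstance
    refine ⟨LinearMap.toContinuousLinearMap f, by simpa using hf0,
      isMaxOn_iff.mpr fun y hy => le_of_eq ?_⟩
    have hyz : f (y -ᵥ z) = 0 := by
      rw [← Submodule.mem_bot ℝ, ← hf]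
      exact Submodule.mem_map_of_mem
        (AffineSubspace.vsub_mem_direction (subset_affineSpan ℝ C hy) (subset_affineSpan ℝ C hz))
    simpa [vsub_eq_sub, sub_eq_zero] using hyz
  · obtain ⟨f, hf⟩ := geometric_hahn_banach_open_point hC.interior isOpen_interior hzi
    refine ⟨f, fun h => by simpa [h] using hf y₀ hy₀, fun y hy => ?_⟩
    have hcl : closure (interior C) ⊆ {y | f y ≤ f z} :=
      closure_minimal (fun a ha => (hf a ha).le) (isClosed_le f.continuous continuous_const)
    rw [hC.closure_interior_eq_closure_of_nonempty_interior ⟨y₀, hy₀⟩] at hcl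
    exact hcl (subset_closure hy)

theorem not_isBounded_connectedComponentIn_of_ray {F : Set E} {x d : E} (hd : d ≠ 0)
    (hray : ∀ t : ℝ, 0 ≤ t → x + t • d ∈ F) :
    ¬ Bornology.IsBounded (connectedComponentIn F x) := by
  have hR : (fun t : ℝ => x + t • d) '' Ici 0 ⊆ connectedComponentIn F x :=
    (isPreconnected_Ici.image _ (by fun_prop : Continuous fun t : ℝ => x + t • d).continuousOn)
      |>.subset_connectedComponentIn ⟨0, self_mem_Ici, by simp⟩ (image_subset_iff.mpr hray)
  intro hb
  obtain ⟨C, hC⟩ := isBounded_iff_forall_norm_le.mp (hb.subset hR)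
  have hxC : ‖x‖ ≤ C := by simpa using hC x ⟨0, self_mem_Ici, by simp⟩
  have hd' : 0 < ‖d‖ := norm_pos_iff.mpr hd
  set t := (C + ‖x‖ + 1) / ‖d‖
  have ht : 0 ≤ t := div_nonneg (by linarith [norm_nonneg x]) hd'.le
  have htd : t * ‖d‖ = C + ‖x‖ + 1 := div_mul_cancel₀ _ hd'.ne'
  have hfar : ‖t • d‖ ≤ ‖x + t • d‖ + ‖x‖ := by simpa using norm_sub_le (x + t • d) x
  rw [norm_smul, Real.norm_of_nonneg ht, htd] at hfar
  linarith [hC _ ⟨t, ht, rfl⟩]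

end NormedSpace

section DotProduct

variable {ι : Type*} [Fintype ι]

theorem mem_frontier_convexHull_of_isMaxOn_dotProduct {S : Set (ι → ℝ)} {z d : ι → ℝ}
    (hz : z ∈ S) (hd : d ≠ 0) (hmax : IsMaxOn (d ⬝ᵥ ·) S z) :
    z ∈ frontier (convexHull ℝ S) := by
  classical
  let e := (dotProductEquiv ℝ ι).trans LinearMap.toContinuousLinearMap
  exact mem_frontier_convexHull_of_isMaxOn (f := e d) hz (e.map_ne_zero_iff.mpr hd) hmax

theorem exists_isMaxOn_dotProduct_of_mem_frontier {S : Set (ι → ℝ)} {z : ι → ℝ}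
    (hz : z ∈ S) (hfr : z ∈ frontier (convexHull ℝ S)) :
    ∃ d ≠ 0, IsMaxOn (d ⬝ᵥ ·) S z := by
  classical
  let e := (dotProductEquiv ℝ ι).trans LinearMap.toContinuousLinearMap
  obtain ⟨f, hf0, hf⟩ := (convex_convexHull ℝ S).exists_isMaxOn_of_notMem_interior
    (subset_convexHull ℝ S hz) hfr.2
  refine ⟨e.symm f, e.symm.map_ne_zero_iff.mpr hf0, ?_⟩
  have : (e.symm f ⬝ᵥ ·) = f := congrArg DFunLike.coe (e.apply_symm_apply f)
  rw [this]
  exact hf.on_subset (subset_convexHull ℝ S)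

end DotProduct

section TieLocus

variable {ι κ X : Type*}

def tieLocus (M : Finset ι) (f : ι → X → ℝ) : Set X :=
  {x | ∃ α ∈ M, ∃ β ∈ M, α ≠ β ∧ f α x = f β x ∧ ∀ γ ∈ M, f γ x ≤ f α x}

variable {M : Finset ι} {f : ι → X → ℝ} {x : X} {β : ι}

theorem notMem_tieLocus_of_forall_lt (hβ : β ∈ M) (h : ∀ γ ∈ M, γ ≠ β → f γ x < f β x) :
    x ∉ tieLocus M f := by
  rintro ⟨α, hα, α', hα', hne, heq, hmax⟩
  obtain rfl : α = β := by_contra fun h' => (h α hα h').not_ge (hmax β hβ)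
  exact (h α' hα' hne.symm).ne heq.symm

theorem forall_lt_of_notMem_tieLocus (hx : x ∉ tieLocus M f) (hβ : β ∈ M)
    (hmax : ∀ γ ∈ M, f γ x ≤ f β x) : ∀ γ ∈ M, γ ≠ β → f γ x < f β x :=
  fun γ hγ hne => (hmax γ hγ).lt_of_ne fun heq => hx ⟨β, hβ, γ, hγ, hne.symm, heq.symm, hmax⟩

theorem tieLocus_eq_of_forall_exists_lt {B : Finset ι} (hBM : B ⊆ M)
    (hdom : ∀ x, ∀ γ ∈ M, γ ∉ B → ∃ β ∈ B, f γ x < f β x) : tieLocus M f = tieLocus B f := by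
  ext x
  constructor
  · rintro ⟨α, hα, α', hα', hne, heq, hmax⟩
    have hmemB : ∀ γ ∈ M, f α x ≤ f γ x → γ ∈ B := fun γ hγ hle => by_contra fun hγB =>
      let ⟨β, hβ, hlt⟩ := hdom x γ hγ hγB
      (hle.trans_lt hlt).not_ge (hmax β (hBM hβ))
    exact ⟨α, hmemB α hα le_rfl, α', hmemB α' hα' heq.le, hne, heq,
      fun γ hγ => hmax γ (hBM hγ)⟩
  · rintro ⟨α, hα, α', hα', hne, heq, hmax⟩
    refine ⟨α, hBM hα, α', hBM hα', hne, heq, fun γ hγ => ?_⟩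
    by_cases hγB : γ ∈ B
    · exact hmax γ hγB
    · obtain ⟨β, hβ, hlt⟩ := hdom x γ hγ hγB
      exact hlt.le.trans (hmax β hβ)

theorem tieLocus_eq_tieLocus_image [DecidableEq κ] {s : ι → κ} (hs : InjOn s M)
    {g : κ → X → ℝ} (h : ∀ α ∈ M, f α = g (s α)) : tieLocus M f = tieLocus (M.image s) g := by
  ext x
  simp only [tieLocus, mem_ofPred_eq, Finset.exists_mem_image, Finset.forall_mem_image]
  constructor
  · rintro ⟨α, hα, α', hα', hne, heq, hmax⟩
    refine ⟨α, hα, α', hα', fun hs' => hne (hs hα hα' hs'), ?_, fun γ hγ => ?_⟩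
    · rwa [← h α hα, ← h α' hα']
    · rw [← h γ hγ, ← h α hα]; exact hmax γ hγ
  · rintro ⟨α, hα, α', hα', hne, heq, hmax⟩
    refine ⟨α, hα, α', hα', fun h' => hne (h' ▸ rfl), ?_, fun γ hγ => ?_⟩
    · rwa [h α hα, h α' hα']
    · rw [h γ hγ, h α hα]; exact hmax hγ

end TieLocus

theorem tieLocus_parabola_eq_range (F : Finset ℝ) {m : ℕ} (hF : F.card = m + 1) :
    tieLocus F (fun a t => t * a - a ^ 2) =
      range fun i : Fin m => F.orderEmbOfFin hF i.castSucc + F.orderEmbOfFin hF i.succ := by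
  set e := F.orderEmbOfFin hF
  have he : ∀ a, a ∈ F ↔ ∃ i, e i = a := fun a => by
    rw [← Finset.mem_coe, ← F.range_orderEmbOfFin hF]; rfl
  -- `t * c - c ^ 2 = t ^ 2 / 4 - (c - t / 2) ^ 2`
  have key : ∀ a b c : ℝ, (a + b) * c - c ^ 2 ≤ (a + b) * a - a ^ 2 ↔ 0 ≤ (c - a) * (c - b) :=
    fun a b c => by constructor <;> intro <;> nlinarith
  ext t
  constructor
  · rintro ⟨a, ha, b, hb, hab, heq, hmax⟩
    wlog hlt : a < b generalizing a b
    · exact this b hb a ha hab.symm heq.symm (fun c hc => heq ▸ hmax c hc)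
        ((not_lt.mp hlt).lt_of_ne hab.symm)
    obtain rfl : t = a + b := by
      have : (b - a) * (t - (a + b)) = 0 := by linear_combination -heq
      rcases mul_eq_zero.mp this with h | h
      · linarith
      · linarith
    obtain ⟨i, rfl⟩ := (he a).mp ha
    obtain ⟨j, rfl⟩ := (he b).mp hb
    have hij : i < j := e.lt_iff_lt.mp hlt
    have hj : j.val = i.val + 1 := by
      by_contra hne
      let k : Fin (m + 1) := ⟨i + 1, by omega⟩
      have h1 : e i < e k := e.strictMono (by rw [Fin.lt_def]; simp [k])
      have h2 : e k < e j := e.strictMono (by rw [Fin.lt_def]; simp [k]; omega)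
      have := (key _ _ (e k)).mp (hmax _ ((he _).mpr ⟨k, rfl⟩))
      nlinarith
    refine ⟨⟨i, by omega⟩, ?_⟩
    exact congrArg₂ (· + ·) (congrArg e (Fin.ext rfl)) (congrArg e (Fin.ext (by simp [hj])))
  · rintro ⟨i, rfl⟩
    have hlt : e i.castSucc < e i.succ := e.strictMono i.castSucc_lt_succ
    refine ⟨_, (he _).mpr ⟨_, rfl⟩, _, (he _).mpr ⟨_, rfl⟩, hlt.ne, by ring, fun c hc => ?_⟩
    obtain ⟨j, rfl⟩ := (he c).mp hc
    rw [key]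
    rcases le_or_gt j i.castSucc with h | h
    · have := e.monotone h
      nlinarith
    · have := e.monotone (Fin.castSucc_lt_iff_succ_le.mp h)
      nlinarith

theorem finite_tieLocus_parabola (F : Finset ℝ) :
    (tieLocus F (fun a t => t * a - a ^ 2)).Finite := by
  obtain hF | ⟨m, hF⟩ : F.card = 0 ∨ ∃ m, F.card = m + 1 := by cases F.card <;> simp
  · simp [Finset.card_eq_zero.mp hF, tieLocus]
  · rw [tieLocus_parabola_eq_range F hF]
    exact finite_range _

theorem ncard_tieLocus_parabola (F : Finset ℝ) :
    (tieLocus F (fun a t => t * a - a ^ 2)).ncard = F.card - 1 := by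
  obtain hF | ⟨m, hF⟩ : F.card = 0 ∨ ∃ m, F.card = m + 1 := by cases F.card <;> simp
  · simp [Finset.card_eq_zero.mp hF, tieLocus]
  · have hmono : StrictMono fun i : Fin m =>
        F.orderEmbOfFin hF i.castSucc + F.orderEmbOfFin hF i.succ := fun i j hij =>
      add_lt_add ((F.orderEmbOfFin hF).strictMono (Fin.castSucc_lt_castSucc_iff.mpr hij))
        ((F.orderEmbOfFin hF).strictMono (Fin.succ_lt_succ_iff.mpr hij))
    rw [tieLocus_parabola_eq_range F hF, ncard_range_of_injective hmono.injective, hF]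
    simp

section Tropical

variable {n : ℕ}

abbrev realPoint (α : Fin n → ℤ) : Fin n → ℝ := fun i => α i

theorem realPoint_injective : Function.Injective (realPoint (n := n)) :=
  Int.cast_injective.comp_left

theorem tropVal_add_smul (c : (Fin n → ℤ) → ℝ) (α : Fin n → ℤ) (x d : Fin n → ℝ) (t : ℝ) :
    tropVal n c α (x + t • d) = tropVal n c α x + t * (d ⬝ᵥ realPoint α) := by
  change (x + t • d) ⬝ᵥ realPoint α + c α = x ⬝ᵥ realPoint α + c α + _
  rw [add_dotProduct, smul_dotProduct, smul_eq_mul]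
  ring

theorem tropVal_smul (c : (Fin n → ℤ) → ℝ) (α : Fin n → ℤ) (d : Fin n → ℝ) (t : ℝ) :
    tropVal n c α (t • d) = t * (d ⬝ᵥ realPoint α) + c α := by
  change (t • d) ⬝ᵥ realPoint α + c α = _
  rw [smul_dotProduct, smul_eq_mul]

open Classical in
noncomputable def boundaryPoints (M : Finset (Fin n → ℤ)) : Finset (Fin n → ℤ) :=
  M.filter fun α => realPoint α ∈ frontier (convexHull ℝ (realPoint '' ↑M))

theorem mem_boundaryPoints {M : Finset (Fin n → ℤ)} {α : Fin n → ℤ} :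
    α ∈ boundaryPoints M ↔ α ∈ M ∧ realPoint α ∈ frontier (convexHull ℝ (realPoint '' ↑M)) :=
  by classical exact Finset.mem_filter

theorem boundaryPoints_subset (M : Finset (Fin n → ℤ)) : boundaryPoints M ⊆ M :=
  fun _ hα => (mem_boundaryPoints.mp hα).1

theorem coe_boundaryPoints (M : Finset (Fin n → ℤ)) :
    (boundaryPoints M : Set (Fin n → ℤ)) = {α : Fin n → ℤ | α ∈ M ∧ (fun i => (α i : ℝ)) ∈
      frontier (convexHull ℝ ((fun (β : Fin n → ℤ) (i : Fin n) => (β i : ℝ)) '' ↑M))} :=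
  by classical exact Finset.coe_filter _ _

theorem mem_boundaryPoints_of_isMaxOn {M : Finset (Fin n → ℤ)} {x : Fin n → ℝ} (hx : x ≠ 0)
    {β : Fin n → ℤ} (hβ : β ∈ M) (hmax : ∀ γ ∈ M, x ⬝ᵥ realPoint γ ≤ x ⬝ᵥ realPoint β) :
    β ∈ boundaryPoints M :=
  mem_boundaryPoints.mpr ⟨hβ, mem_frontier_convexHull_of_isMaxOn_dotProduct
    (mem_image_of_mem _ hβ) hx (by rintro _ ⟨γ, hγ, rfl⟩; exact hmax γ hγ)⟩

theorem exists_mem_boundaryPoints_dotProduct_le [NeZero n] {M : Finset (Fin n → ℤ)}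
    (hM : M.Nonempty) (x : Fin n → ℝ) {γ : Fin n → ℤ} (hγ : γ ∈ M) :
    ∃ β ∈ boundaryPoints M, x ⬝ᵥ realPoint γ ≤ x ⬝ᵥ realPoint β := by
  by_cases hx : x = 0
  · obtain ⟨v, hv⟩ := exists_ne (0 : Fin n → ℝ)
    obtain ⟨β, hβ, hmax⟩ := M.exists_max_image (v ⬝ᵥ realPoint ·) hM
    exact ⟨β, mem_boundaryPoints_of_isMaxOn hv hβ hmax, by simp [hx]⟩
  · obtain ⟨β, hβ, hmax⟩ := M.exists_max_image (x ⬝ᵥ realPoint ·) hM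
    exact ⟨β, mem_boundaryPoints_of_isMaxOn hx hβ hmax, hmax γ hγ⟩

theorem not_isBounded_connectedComponentIn_compl_tropHypersurface {M : Finset (Fin n → ℤ)}
    (hM : M.Nonempty) {c : (Fin n → ℤ) → ℝ}
    (hc : ∀ x, ∀ β ∈ M, (∀ γ ∈ M, tropVal n c γ x ≤ tropVal n c β x) → β ∈ boundaryPoints M)
    {x : Fin n → ℝ} (hx : x ∉ tropHypersurface n M c) :
    ¬ Bornology.IsBounded (connectedComponentIn (tropHypersurface n M c)ᶜ x) := by
  obtain ⟨β, hβ, hmax⟩ := M.exists_max_image (tropVal n c · x) hM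
  have hlt := forall_lt_of_notMem_tieLocus hx hβ hmax
  obtain ⟨d, hd0, hd⟩ := exists_isMaxOn_dotProduct_of_mem_frontier (mem_image_of_mem _ hβ)
    (mem_boundaryPoints.mp (hc x β hβ hmax)).2
  refine not_isBounded_connectedComponentIn_of_ray hd0 fun t ht =>
    notMem_tieLocus_of_forall_lt hβ fun γ hγ hne => ?_
  rw [tropVal_add_smul, tropVal_add_smul]
  have hdγ : d ⬝ᵥ realPoint γ ≤ d ⬝ᵥ realPoint β := hd (mem_image_of_mem _ hγ)
  nlinarith [hlt γ hγ hne, mul_le_mul_of_nonneg_left hdγ ht]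

noncomputable def parabolaCoeff (M : Finset (Fin n → ℤ)) (w : Fin n → ℝ) (α : Fin n → ℤ) : ℝ :=
  if α ∈ boundaryPoints M then -(w ⬝ᵥ realPoint α) ^ 2
  else -(1 + ∑ β ∈ M, (w ⬝ᵥ realPoint β) ^ 2)

theorem parabolaCoeff_lt {M : Finset (Fin n → ℤ)} (w : Fin n → ℝ) {β γ : Fin n → ℤ}
    (hβ : β ∈ boundaryPoints M) (hγ : γ ∉ boundaryPoints M) :
    parabolaCoeff M w γ < parabolaCoeff M w β := by
  have hβM : β ∈ M := boundaryPoints_subset M hβ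
  have := Finset.single_le_sum (fun α _ => sq_nonneg (w ⬝ᵥ realPoint α)) hβM
  simp only [parabolaCoeff, hβ, hγ, if_true, if_false]
  linarith

theorem exists_tropVal_parabolaCoeff_lt [NeZero n] {M : Finset (Fin n → ℤ)} (hM : M.Nonempty)
    (w x : Fin n → ℝ) {γ : Fin n → ℤ} (hγ : γ ∈ M) (hγB : γ ∉ boundaryPoints M) :
    ∃ β ∈ boundaryPoints M,
      tropVal n (parabolaCoeff M w) γ x < tropVal n (parabolaCoeff M w) β x := by
  obtain ⟨β, hβ, hle⟩ := exists_mem_boundaryPoints_dotProduct_le hM x hγ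
  refine ⟨β, hβ, ?_⟩
  change x ⬝ᵥ realPoint γ + _ < x ⬝ᵥ realPoint β + _
  linarith [parabolaCoeff_lt w hβ hγB]

theorem tropHypersurface_parabolaCoeff [NeZero n] {M : Finset (Fin n → ℤ)} (hM : M.Nonempty)
    (w : Fin n → ℝ) :
    tropHypersurface n M (parabolaCoeff M w) =
      tieLocus (boundaryPoints M) (tropVal n (parabolaCoeff M w)) :=
  tieLocus_eq_of_forall_exists_lt (boundaryPoints_subset M) fun x _ hγ hγB =>
    exists_tropVal_parabolaCoeff_lt hM w x hγ hγB

theorem preimage_smul_tropHypersurface_parabolaCoeff [NeZero n] {M : Finset (Fin n → ℤ)}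
    (hM : M.Nonempty) {w : Fin n → ℝ} (hw : InjOn (fun α => w ⬝ᵥ realPoint α) M) :
    (· • w) ⁻¹' tropHypersurface n M (parabolaCoeff M w) =
      tieLocus ((boundaryPoints M).image fun α => w ⬝ᵥ realPoint α) fun a t => t * a - a ^ 2 := by
  rw [tropHypersurface_parabolaCoeff hM]
  refine tieLocus_eq_tieLocus_image (hw.mono (boundaryPoints_subset M)) fun β hβ => ?_
  funext t
  rw [tropVal_smul, parabolaCoeff, if_pos hβ]
  ring

end Tropical

theorem stmt7 (n : ℕ) (hn : 1 ≤ n) (M : Finset (Fin n → ℤ)) (hM : M.Nonempty) :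
    ∃ c : (Fin n → ℤ) → ℝ, ∃ u v : Fin n → ℝ, v ≠ 0 ∧
      -- every connected component of the complement of `T` is unbounded
      (∀ x ∉ tropHypersurface n M c,
        ¬ Bornology.IsBounded (connectedComponentIn (tropHypersurface n M c)ᶜ x)) ∧
      ((Set.range fun t : ℝ => u + t • v) ∩ tropHypersurface n M c).Finite ∧
      ((Set.range fun t : ℝ => u + t • v) ∩ tropHypersurface n M c).ncard =
        {α : Fin n → ℤ | α ∈ M ∧ (fun i => (α i : ℝ)) ∈
          frontier (convexHull ℝ ((fun (β : Fin n → ℤ) (i : Fin n) => (β i : ℝ)) '' ↑M))}.ncard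
          - 1 := by
  have : NeZero n := ⟨by omega⟩
  obtain ⟨w, hw0, hw⟩ := exists_ne_zero_injOn_dotProduct (M.finite_toSet.image realPoint)
  have hwM : InjOn (fun α => w ⬝ᵥ realPoint α) M :=
    hw.comp realPoint_injective.injOn (mapsTo_image _ _)
  have hline : range (fun t : ℝ => 0 + t • w) ∩ tropHypersurface n M (parabolaCoeff M w) =
      (· • w) '' tieLocus ((boundaryPoints M).image fun α => w ⬝ᵥ realPoint α)
        fun a t => t * a - a ^ 2 := by
    simp only [zero_add]
    rw [← image_preimage_eq_range_inter, preimage_smul_tropHypersurface_parabolaCoeff hM hwM]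
  refine ⟨parabolaCoeff M w, 0, w, hw0, fun x hx => ?_, ?_, ?_⟩
  · refine not_isBounded_connectedComponentIn_compl_tropHypersurface hM
      (fun x β hβ hmax => by_contra fun hβB => ?_) hx
    obtain ⟨β', hβ', hlt⟩ := exists_tropVal_parabolaCoeff_lt hM w x hβ hβB
    exact hlt.not_ge (hmax β' (boundaryPoints_subset M hβ'))
  · rw [hline]
    exact (finite_tieLocus_parabola _).image _
  · rw [hline, ncard_image_of_injective _ (smul_left_injective ℝ hw0), ncard_tieLocus_parabola,
      Finset.card_image_of_injOn (hwM.mono (boundaryPoints_subset M)), ← coe_boundaryPoints,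
      ncard_coe_finset]
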